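/- If ν has a non-trivial absolutely continuous part with respect to Lebesgue measure Λ (i.e. in the Lebesgue decomposition ν = ν_ac + ν_sing with ν_ac ≪ Λ one has ν_ac ≠ 0), then β_ν(s) = m·(1−s) for all s ∈ (0,1) (claim in Remark 1.2, via Jensen's inequality). -/

import Mathlib

/-!
Only the `2^(nm)` dyadic cubes inside `(0,1]^m` carry mass, so Hölder's inequality (concavity
of `t ↦ t^s`) bounds `∑ ν(C)^s` above by `2^(nm(1-s))`. Conversely, if `f` is the density of the
absolutely continuous part, Hölder on each cube gives `∫_C f^s ≤ ν(C)^s Λ(C)^(1-s)`; summing over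
the cubes, `0 < ∫_Q f^s ≤ 2^(-nm(1-s)) ∑ ν(C)^s`. Hence `∑ ν(C)^s` is comparable to
`2^(nm(1-s))`, and `β_n^ν(s) → m(1-s)`.
-/

open MeasureTheory Filter
open scoped ENNReal Topology

noncomputable section

/-- The half-open unit cube `(0,1]^m`. -/
def unitCube (m : ℕ) : Set (Fin m → ℝ) := {x | ∀ i, x i ∈ Set.Ioc (0 : ℝ) 1}

/-- The half-open dyadic cube of generation `n` indexed by `l ∈ ℤ^m`. -/
def dyadicCube (m n : ℕ) (l : Fin m → ℤ) : Set (Fin m → ℝ) :=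
  {x | ∀ i, x i ∈ Set.Ioc ((l i : ℝ) / 2 ^ n) (((l i : ℝ) + 1) / 2 ^ n)}

/-- `β_n^ν(s) = log (∑_{C ∈ 𝒟_n} ν(C)^s) / log (2^n)`, the sum running over all
dyadic cubes of generation `n` with positive `ν`-measure. -/
def betaN (m : ℕ) (ν : Measure (Fin m → ℝ)) (n : ℕ) (s : ℝ) : ℝ :=
  Real.log (∑' l : {l : Fin m → ℤ // 0 < ν (dyadicCube m n l)},
      (ν (dyadicCube m n l.1)).toReal ^ s) / Real.log ((2 : ℝ) ^ n)

/-- The `L^q`-spectrum `β_ν(s) = limsup_n β_n^ν(s)`. -/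
def lqSpectrum (m : ℕ) (ν : Measure (Fin m → ℝ)) (s : ℝ) : ℝ :=
  limsup (fun n => betaN m ν n s) atTop

/-- `s_b = inf {s > 0 : β_ν(s) - b·s ≤ 0}`. -/
def sb (m : ℕ) (ν : Measure (Fin m → ℝ)) (b : ℝ) : ℝ :=
  sInf {s : ℝ | 0 < s ∧ lqSpectrum m ν s - b * s ≤ 0}

def dyadicIndex (m n : ℕ) (x : Fin m → ℝ) : Fin m → ℤ := fun i => ⌈(2 : ℝ) ^ n * x i⌉ - 1

def dyadicIndexBox (m n : ℕ) : Finset (Fin m → ℤ) :=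
  Fintype.piFinset fun _ => Finset.Ico 0 (2 ^ n)

section Geometry

variable {m n : ℕ}

theorem mem_dyadicCube_iff {l : Fin m → ℤ} {x : Fin m → ℝ} :
    x ∈ dyadicCube m n l ↔ dyadicIndex m n x = l := by
  have h2 : (0 : ℝ) < 2 ^ n := by positivity
  simp only [dyadicCube, Set.mem_ofPred_eq, Set.mem_Ioc, funext_iff, dyadicIndex,
    sub_eq_iff_eq_add, Int.ceil_eq_iff, div_lt_iff₀' h2, le_div_iff₀' h2]
  push_cast
  exact forall_congr' fun i => and_congr (by constructor <;> intro <;> linarith) Iff.rfl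

theorem dyadicCube_eq_preimage (l : Fin m → ℤ) : dyadicCube m n l = dyadicIndex m n ⁻¹' {l} :=
  Set.ext fun _ => mem_dyadicCube_iff

theorem unitCube_eq_preimage : unitCube m = dyadicIndex m n ⁻¹' dyadicIndexBox m n := by
  have h2 : (0 : ℝ) < 2 ^ n := by positivity
  ext x
  simp only [unitCube, dyadicIndexBox, dyadicIndex, Set.mem_ofPred_eq, Set.mem_preimage,
    Finset.mem_coe, Fintype.mem_piFinset, Finset.mem_Ico, Set.mem_Ioc, sub_nonneg,
    sub_lt_iff_lt_add, Int.one_le_ceil_iff, Int.lt_add_one_iff, Int.ceil_le]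
  push_cast
  exact forall_congr' fun i => and_congr (by simp [h2]) (mul_le_iff_le_one_right h2).symm

theorem pairwise_disjoint_dyadicCube :
    Pairwise fun l l' => Disjoint (dyadicCube m n l) (dyadicCube m n l') := fun l l' hll' => by
  simp only [dyadicCube_eq_preimage]
  exact (Set.disjoint_singleton.2 hll').preimage _

theorem biUnion_dyadicIndexBox : ⋃ l ∈ dyadicIndexBox m n, dyadicCube m n l = unitCube m := by
  ext x
  simp [unitCube_eq_preimage (n := n), mem_dyadicCube_iff]

theorem dyadicCube_subset_compl_unitCube {l : Fin m → ℤ} (hl : l ∉ dyadicIndexBox m n) :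
    dyadicCube m n l ⊆ (unitCube m)ᶜ := by
  intro x hx
  simp_all [unitCube_eq_preimage (n := n), mem_dyadicCube_iff]

theorem card_dyadicIndexBox : (dyadicIndexBox m n).card = 2 ^ (n * m) := by
  simp only [dyadicIndexBox, Fintype.card_piFinset, Int.card_Ico, sub_zero, Finset.prod_const,
    Finset.card_univ, Fintype.card_fin, pow_mul]
  norm_cast

theorem dyadicCube_eq_pi (l : Fin m → ℤ) :
    dyadicCube m n l = Set.univ.pi fun i => Set.Ioc ((l i : ℝ) / 2 ^ n) ((l i + 1) / 2 ^ n) := by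
  ext; simp [dyadicCube]

theorem unitCube_eq_dyadicCube : unitCube m = dyadicCube m 0 0 := by
  ext; simp [unitCube, dyadicCube]

theorem measurableSet_dyadicCube (l : Fin m → ℤ) : MeasurableSet (dyadicCube m n l) := by
  rw [dyadicCube_eq_pi]
  exact .univ_pi fun _ => measurableSet_Ioc

theorem volume_dyadicCube (l : Fin m → ℤ) :
    volume (dyadicCube m n l) = ((2 : ℝ≥0∞) ^ (n * m))⁻¹ := by
  rw [dyadicCube_eq_pi, volume_pi_pi]
  simp [Real.volume_Ioc, ← sub_div, pow_mul, ENNReal.ofReal_inv_of_pos, ENNReal.inv_pow]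

theorem measurableSet_unitCube : MeasurableSet (unitCube m) :=
  unitCube_eq_dyadicCube ▸ measurableSet_dyadicCube 0

theorem volume_unitCube : volume (unitCube m) = 1 := by
  simp [unitCube_eq_dyadicCube, volume_dyadicCube]

end Geometry

section Holder

variable {s : ℝ}

theorem lintegral_rpow_le_lintegral_rpow_mul_measure_univ {α : Type*} [MeasurableSpace α]
    {μ : Measure α} {f : α → ℝ≥0∞} (hf : AEMeasurable f μ) (hs0 : 0 < s) (hs1 : s < 1) :
    ∫⁻ x, f x ^ s ∂μ ≤ (∫⁻ x, f x ∂μ) ^ s * μ Set.univ ^ (1 - s) := by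
  have hpq : (1 / s).HolderConjugate (1 / (1 - s)) :=
    Real.holderConjugate_one_div hs0 (by linarith) (by ring)
  have := ENNReal.lintegral_mul_le_Lp_mul_Lq μ hpq (hf.pow_const s) (aemeasurable_const (b := 1))
  simpa [← ENNReal.rpow_mul, hs0.ne'] using this

theorem ENNReal.sum_rpow_le_sum_rpow_mul_card_rpow {ι : Type*} (t : Finset ι) (f : ι → ℝ≥0∞)
    (hs0 : 0 < s) (hs1 : s < 1) :
    ∑ i ∈ t, f i ^ s ≤ (∑ i ∈ t, f i) ^ s * (t.card : ℝ≥0∞) ^ (1 - s) := by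
  have hpq : (1 / s).HolderConjugate (1 / (1 - s)) :=
    Real.holderConjugate_one_div hs0 (by linarith) (by ring)
  have := ENNReal.inner_le_Lp_mul_Lq t (fun i => f i ^ s) 1 hpq
  simpa [← ENNReal.rpow_mul, hs0.ne'] using this

theorem lintegral_rpow_eq_zero_iff {α : Type*} [MeasurableSpace α] {μ : Measure α}
    {f : α → ℝ≥0∞} (hf : AEMeasurable f μ) (hs0 : 0 < s) :
    ∫⁻ x, f x ^ s ∂μ = 0 ↔ ∫⁻ x, f x ∂μ = 0 := by
  simp [lintegral_eq_zero_iff' hf, lintegral_eq_zero_iff' (hf.pow_const s), Filter.EventuallyEq,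
    ENNReal.rpow_eq_zero_iff_of_pos hs0]

end Holder

theorem tendsto_log_div_log_pow_of_le_of_le {S : ℕ → ℝ} {b c C r : ℝ} (hb : 1 < b) (hc : 0 < c)
    (hC : 0 < C) (hS : ∀ n : ℕ, c * b ^ (r * n) ≤ S n ∧ S n ≤ C * b ^ (r * n)) :
    Tendsto (fun n => Real.log (S n) / Real.log (b ^ n)) atTop (𝓝 r) := by
  have hlogb : 0 < Real.log b := Real.log_pos hb
  have hlim (a : ℝ) : Tendsto (fun n : ℕ => r + Real.log a / Real.log b / n) atTop (𝓝 r) := by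
    simpa using
      tendsto_const_nhds.add (tendsto_const_div_atTop_nhds_zero_nat (Real.log a / Real.log b))
  have hbound {a : ℝ} (ha : 0 < a) {n : ℕ} (hn : 1 ≤ n) :
      Real.log (a * b ^ (r * n)) / Real.log (b ^ n) = r + Real.log a / Real.log b / n := by
    rw [Real.log_mul ha.ne' (by positivity), Real.log_rpow (by positivity), Real.log_pow]
    have : (n : ℝ) ≠ 0 := by positivity
    field_simp
    ring
  refine tendsto_of_tendsto_of_tendsto_of_le_of_le' (hlim c) (hlim C) ?_ ?_ <;>
    filter_upwards [eventually_ge_atTop 1] with n hn <;>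
    have hlogbn : 0 < Real.log (b ^ n) := Real.log_pos (one_lt_pow₀ hb (by omega))
  · rw [← hbound hc hn]
    gcongr
    exact (hS n).1
  · rw [← hbound hC hn]
    have : 0 < S n := lt_of_lt_of_le (by positivity) (hS n).1
    gcongr
    exact (hS n).2

def dyadicPartitionSum (m n : ℕ) (ν : Measure (Fin m → ℝ)) (s : ℝ) : ℝ≥0∞ :=
  ∑ l ∈ dyadicIndexBox m n, ν (dyadicCube m n l) ^ s

section PartitionSum

variable {m : ℕ} {ν : Measure (Fin m → ℝ)} {s : ℝ}

theorem betaN_eq_log_dyadicPartitionSum [IsFiniteMeasure ν] (hν : ν (unitCube m)ᶜ = 0)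
    (hs : 0 < s) (n : ℕ) :
    betaN m ν n s = Real.log (dyadicPartitionSum m n ν s).toReal / Real.log (2 ^ n) := by
  let a : (Fin m → ℤ) → ℝ := fun l => (ν (dyadicCube m n l)).toReal ^ s
  have ha_supp : Function.support a ⊆ {l | 0 < ν (dyadicCube m n l)} := fun l hl => by
    contrapose! hl
    simp_all [a, hs.ne']
  have ha_box : ∀ l ∉ dyadicIndexBox m n, a l = 0 := fun l hl => by
    simp [a, measure_mono_null (dyadicCube_subset_compl_unitCube hl) hν, hs.ne']
  have : ∑' l : {l // 0 < ν (dyadicCube m n l)}, a l = ∑ l ∈ dyadicIndexBox m n, a l :=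
    (tsum_subtype_eq_of_support_subset ha_supp).trans (tsum_eq_sum ha_box)
  rw [betaN, this, dyadicPartitionSum, ENNReal.toReal_sum fun l _ => by finiteness]
  simp only [a, ENNReal.toReal_rpow]

theorem dyadicPartitionSum_le [IsProbabilityMeasure ν] (hs0 : 0 < s) (hs1 : s < 1) (n : ℕ) :
    dyadicPartitionSum m n ν s ≤ 2 ^ (m * (1 - s) * n) := by
  have hmass : ∑ l ∈ dyadicIndexBox m n, ν (dyadicCube m n l) ≤ 1 := by
    rw [← measure_biUnion_finset (pairwise_disjoint_dyadicCube.set_pairwise _)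
      fun l _ => measurableSet_dyadicCube l]
    exact prob_le_one
  calc dyadicPartitionSum m n ν s
      ≤ (∑ l ∈ dyadicIndexBox m n, ν (dyadicCube m n l)) ^ s
          * ((dyadicIndexBox m n).card : ℝ≥0∞) ^ (1 - s) :=
        ENNReal.sum_rpow_le_sum_rpow_mul_card_rpow _ _ hs0 hs1
    _ ≤ 1 ^ s * ((2 : ℝ≥0∞) ^ (n * m)) ^ (1 - s) := by
        rw [card_dyadicIndexBox, Nat.cast_pow, Nat.cast_ofNat]
        gcongr
    _ = 2 ^ (m * (1 - s) * n) := by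
        rw [ENNReal.one_rpow, one_mul, ← ENNReal.rpow_natCast, ← ENNReal.rpow_mul]
        push_cast
        ring_nf

theorem lintegral_rpow_mul_le_dyadicPartitionSum {f : (Fin m → ℝ) → ℝ≥0∞}
    (hf : AEMeasurable f) (hfν : volume.withDensity f ≤ ν) (hs0 : 0 < s) (hs1 : s < 1) (n : ℕ) :
    (∫⁻ x in unitCube m, f x ^ s) * 2 ^ (m * (1 - s) * n) ≤ dyadicPartitionSum m n ν s := by
  have hvol (l : Fin m → ℤ) :
      volume (dyadicCube m n l) ^ (1 - s) = (2 ^ (m * (1 - s) * n))⁻¹ := by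
    rw [volume_dyadicCube, ENNReal.inv_rpow, ← ENNReal.rpow_natCast, ← ENNReal.rpow_mul]
    push_cast
    ring_nf
  have hcube (l : Fin m → ℤ) :
      ∫⁻ x in dyadicCube m n l, f x ^ s
        ≤ ν (dyadicCube m n l) ^ s * (2 ^ (m * (1 - s) * n))⁻¹ := by
    calc ∫⁻ x in dyadicCube m n l, f x ^ s
        ≤ (∫⁻ x in dyadicCube m n l, f x) ^ s * volume (dyadicCube m n l) ^ (1 - s) := by
          simpa using lintegral_rpow_le_lintegral_rpow_mul_measure_univ hf.restrict hs0 hs1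
      _ ≤ ν (dyadicCube m n l) ^ s * (2 ^ (m * (1 - s) * n))⁻¹ := by
          rw [hvol, ← withDensity_apply _ (measurableSet_dyadicCube l)]
          gcongr
  rw [← ENNReal.le_div_iff_mul_le (by simp) (by simp), div_eq_mul_inv, dyadicPartitionSum,
    Finset.sum_mul, ← biUnion_dyadicIndexBox (n := n), lintegral_biUnion_finset
      (pairwise_disjoint_dyadicCube.set_pairwise _) fun l _ => measurableSet_dyadicCube l]
  exact Finset.sum_le_sum fun l _ => hcube l

theorem lintegral_unitCube_rpow_ne_top [IsFiniteMeasure ν] {f : (Fin m → ℝ) → ℝ≥0∞}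
    (hf : AEMeasurable f) (hfν : volume.withDensity f ≤ ν) (hs0 : 0 < s) (hs1 : s < 1) :
    ∫⁻ x in unitCube m, f x ^ s ≠ ∞ := by
  refine ne_top_of_le_ne_top ?_
    (lintegral_rpow_le_lintegral_rpow_mul_measure_univ hf.restrict hs0 hs1)
  rw [Measure.restrict_apply_univ, volume_unitCube, ENNReal.one_rpow, mul_one,
    ← withDensity_apply _ measurableSet_unitCube]
  exact ENNReal.rpow_ne_top_of_nonneg hs0.le (ne_top_of_le_ne_top (measure_ne_top ν _) (hfν _))

theorem lintegral_unitCube_rpow_ne_zero {f : (Fin m → ℝ) → ℝ≥0∞} (hf : AEMeasurable f)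
    (hfν : volume.withDensity f ≤ ν) (hf0 : volume.withDensity f ≠ 0)
    (hν : ν (unitCube m)ᶜ = 0) (hs0 : 0 < s) :
    ∫⁻ x in unitCube m, f x ^ s ≠ 0 := by
  rw [Ne, lintegral_rpow_eq_zero_iff hf.restrict hs0,
    ← withDensity_apply _ measurableSet_unitCube]
  intro hzero
  apply hf0
  rw [← Measure.measure_univ_eq_zero, ← measure_add_measure_compl measurableSet_unitCube, hzero,
    zero_add]
  exact nonpos_iff_eq_zero.1 ((hfν _).trans hν.le)

end PartitionSum

theorem statement8_general (m : ℕ) (ν : Measure (Fin m → ℝ))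
    [IsProbabilityMeasure ν] (hν : ν (unitCube m) = 1)
    (hac : volume.withDensity (ν.rnDeriv volume) ≠ 0) :
    ∀ s ∈ Set.Ioo (0 : ℝ) 1, lqSpectrum m ν s = (m : ℝ) * (1 - s) := by
  rintro s ⟨hs0, hs1⟩
  have hνc : ν (unitCube m)ᶜ = 0 := (prob_compl_eq_zero_iff measurableSet_unitCube).2 hν
  have hf : AEMeasurable (ν.rnDeriv volume) := (Measure.measurable_rnDeriv ν volume).aemeasurable
  have hfν := Measure.withDensity_rnDeriv_le ν volume
  set c := ∫⁻ x in unitCube m, ν.rnDeriv volume x ^ s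
  have hc : 0 < c.toReal := ENNReal.toReal_pos
    (lintegral_unitCube_rpow_ne_zero hf hfν hac hνc hs0)
    (lintegral_unitCube_rpow_ne_top hf hfν hs0 hs1)
  have hbounds (n : ℕ) : c.toReal * 2 ^ (m * (1 - s) * n) ≤ (dyadicPartitionSum m n ν s).toReal
      ∧ (dyadicPartitionSum m n ν s).toReal ≤ 1 * 2 ^ (m * (1 - s) * n) := by
    have hupper := dyadicPartitionSum_le (ν := ν) hs0 hs1 n
    have hlower := lintegral_rpow_mul_le_dyadicPartitionSum hf hfν hs0 hs1 n
    have hR : ((2 : ℝ≥0∞) ^ (m * (1 - s) * n)).toReal = 2 ^ (m * (1 - s) * n) := by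
      simp [← ENNReal.toReal_rpow]
    rw [one_mul, ← hR, ← ENNReal.toReal_mul]
    exact ⟨ENNReal.toReal_mono (ne_top_of_le_ne_top (by simp) hupper) hlower,
      ENNReal.toReal_mono (by simp) hupper⟩
  simp only [lqSpectrum, betaN_eq_log_dyadicPartitionSum hνc hs0]
  exact (tendsto_log_div_log_pow_of_le_of_le one_lt_two hc one_pos hbounds).limsup_eq

/-- **Remark 1.2 (absolutely continuous part)**: if the absolutely continuous part of
`ν` in its Lebesgue decomposition with respect to the Lebesgue measure is non-trivial,
then `β_ν(s) = m·(1-s)` for all `s ∈ (0,1)`. -/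
theorem statement8 (m : ℕ) (hm : 0 < m) (ν : Measure (Fin m → ℝ))
    [IsProbabilityMeasure ν] (hν : ν (unitCube m) = 1)
    (hac : volume.withDensity (ν.rnDeriv volume) ≠ 0) :
    ∀ s ∈ Set.Ioo (0 : ℝ) 1, lqSpectrum m ν s = (m : ℝ) * (1 - s) :=
  statement8_general m ν hν hac
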